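/- arXiv:1704.08341 — 3 statements merged into one kernel-verified Lean document; each statement's English description precedes it below -/
import Mathlib

section
/- Let A be a semiprime ring containing a right ideal D such that D, as a right A-module, is the internal direct sum of a countably infinite family of nonzero right ideals D_i (i = 1, 2, ...) satisfying D_i · D_j = 0 for all i ≠ j. Then the sum of the two-sided ideals A·D_i of A is a direct sum (i.e., for each i, (A·D_i) ∩ (Σ_{j≠i} A·D_j) = 0). -/
open MulOpposite

namespace TugPaper

universe u v

/-- A submodule `N` of `M` is essential if it intersects every nonzero submodule nontrivially. -/
def IsEssentialSubmodule {R : Type*} {M : Type*} [Ring R] [AddCommGroup M] [Module R M]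
    (N : Submodule R M) : Prop :=
  ∀ Z : Submodule R M, Z ≠ ⊥ → N ⊓ Z ≠ ⊥

/-- The right annihilator `r(x) = {a : A | x·a = 0}` of an element `x` of a right `A`-module,
as a right ideal of `A` (i.e. a submodule of `A` viewed as a right module over itself). -/
def rAnn (A : Type*) [Ring A] {M : Type*} [AddCommGroup M] [Module Aᵐᵒᵖ M] (x : M) :
    Submodule Aᵐᵒᵖ A where
  carrier := {a : A | op a • x = 0}
  zero_mem' := by simp
  add_mem' := by
    intro a b ha hb
    simp only [Set.mem_setOf_eq] at *
    rw [op_add, add_smul, ha, hb, add_zero]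
  smul_mem' := by
    intro c a ha
    simp only [Set.mem_setOf_eq] at *
    have : (c • a : A) = a * c.unop := rfl
    rw [this]
    have h2 : op (a * c.unop) = op c.unop * op a := by simp
    rw [h2, mul_smul, ha, smul_zero]

/-- A right `A`-module `M` is non-singular if its singular submodule is zero, i.e. the only
element whose right annihilator is an essential right ideal is `0`. -/
def IsNonsingular (A : Type*) [Ring A] (M : Type*) [AddCommGroup M] [Module Aᵐᵒᵖ M] : Prop :=
  ∀ x : M, IsEssentialSubmodule (rAnn A x) → x = 0

/-- The Goldie radical of a right `A`-module `M`: the intersection of all submodules `Y`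
such that `M/Y` is non-singular. -/
def goldieRadical (A : Type*) [Ring A] (M : Type*) [AddCommGroup M] [Module Aᵐᵒᵖ M] :
    Submodule Aᵐᵒᵖ M :=
  sInf {Y : Submodule Aᵐᵒᵖ M | IsNonsingular A (M ⧸ Y)}

/-- A right `A`-module `M` is automorphism-invariant: for every injective module `Q`
containing (a copy of) `M` as an essential submodule, every automorphism of `Q` maps `M`
into `M`. -/
def AutomorphismInvariant (A : Type u) [Ring A] (M : Type v) [AddCommGroup M]
    [Module Aᵐᵒᵖ M] : Prop :=
  ∀ (Q : Type v) [AddCommGroup Q] [Module Aᵐᵒᵖ Q], Module.Injective Aᵐᵒᵖ Q →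
    ∀ i : M →ₗ[Aᵐᵒᵖ] Q, Function.Injective i →
      IsEssentialSubmodule (LinearMap.range i) →
        ∀ g : Q ≃ₗ[Aᵐᵒᵖ] Q, ∀ m : M, ∃ m' : M, g (i m) = i m'

/-- A module `M` is quasi-injective if every homomorphism from a submodule of `M` into `M`
extends to an endomorphism of `M`. -/
def QuasiInjective (A : Type*) [Ring A] (M : Type*) [AddCommGroup M] [Module Aᵐᵒᵖ M] : Prop :=
  ∀ (N : Submodule Aᵐᵒᵖ M) (f : N →ₗ[Aᵐᵒᵖ] M), ∃ g : M →ₗ[Aᵐᵒᵖ] M, ∀ n : N, g n = f n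

/-- A right ideal of `A` is two-sided if it is also closed under left multiplication. -/
def IsTwoSided (A : Type*) [Ring A] (I : Submodule Aᵐᵒᵖ A) : Prop :=
  ∀ a : A, ∀ x ∈ I, a * x ∈ I

/-- A ring `A` is right strongly semiprime if every two-sided ideal of `A` which is essential
as a right ideal contains a finite subset with zero right annihilator. -/
def RightStronglySemiprime (A : Type*) [Ring A] : Prop :=
  ∀ I : Submodule Aᵐᵒᵖ A, IsTwoSided A I → IsEssentialSubmodule I →
    ∃ S : Finset A, (S : Set A) ⊆ (I : Set A) ∧ ∀ a : A, (∀ s ∈ S, s * a = 0) → a = 0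

/-- A ring is semiprime if it has no nonzero two-sided ideal with zero square. -/
def SemiprimeRing (A : Type*) [Ring A] : Prop :=
  ∀ I : Submodule Aᵐᵒᵖ A, IsTwoSided A I → (∀ x ∈ I, ∀ y ∈ I, x * y = 0) → I = ⊥

/-- The ring `A` does not contain an infinite direct sum of nonzero two-sided ideals. -/
def NoInfiniteIdealDirectSum (A : Type*) [Ring A] : Prop :=
  ¬ ∃ I : ℕ → Submodule Aᵐᵒᵖ A,
      (∀ n, IsTwoSided A (I n)) ∧ (∀ n, I n ≠ ⊥) ∧
        ∀ n, I n ⊓ (⨆ m ∈ {m : ℕ | m ≠ n}, I m) = ⊥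

/-- A module is square-free if it does not contain a direct sum of two nonzero isomorphic
submodules. -/
def SquareFreeModule (A : Type*) [Ring A] (M : Type*) [AddCommGroup M] [Module Aᵐᵒᵖ M] : Prop :=
  ¬ ∃ D₁ D₂ : Submodule Aᵐᵒᵖ M,
      D₁ ≠ ⊥ ∧ D₂ ≠ ⊥ ∧ D₁ ⊓ D₂ = ⊥ ∧ Nonempty (D₁ ≃ₗ[Aᵐᵒᵖ] D₂)

/-- A module is uniform if any two nonzero submodules have nonzero intersection. -/
def UniformModule (A : Type*) [Ring A] (M : Type*) [AddCommGroup M] [Module Aᵐᵒᵖ M] : Prop :=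
  ∀ N₁ N₂ : Submodule Aᵐᵒᵖ M, N₁ ≠ ⊥ → N₂ ≠ ⊥ → N₁ ⊓ N₂ ≠ ⊥

/-- `N` is an essential submodule of `P` (both submodules of an ambient module). -/
def EssentialIn {R : Type*} {M : Type*} [Ring R] [AddCommGroup M] [Module R M]
    (N P : Submodule R M) : Prop :=
  N ≤ P ∧ ∀ Z : Submodule R M, Z ≤ P → Z ≠ ⊥ → N ⊓ Z ≠ ⊥

/-- A submodule is closed if it has no proper essential extension inside the ambient module. -/
def ClosedSubmodule {R : Type*} {M : Type*} [Ring R] [AddCommGroup M] [Module R M]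
    (N : Submodule R M) : Prop :=
  ∀ P : Submodule R M, EssentialIn N P → N = P

/-- A module is CS if every closed submodule is a direct summand. -/
def CSModule (A : Type*) [Ring A] (M : Type*) [AddCommGroup M] [Module Aᵐᵒᵖ M] : Prop :=
  ∀ N : Submodule Aᵐᵒᵖ M, ClosedSubmodule N → ∃ P : Submodule Aᵐᵒᵖ M, IsCompl N P

/-- `X` is injective relative to `Y` (`Y`-injective): every homomorphism from a submodule of `Y`
into `X` extends to a homomorphism `Y → X`. -/
def RelativelyInjective (R : Type*) [Ring R] (Y X : Type*) [AddCommGroup Y] [Module R Y]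
    [AddCommGroup X] [Module R X] : Prop :=
  ∀ (N : Submodule R Y) (f : N →ₗ[R] X), ∃ g : Y →ₗ[R] X, ∀ n : N, g n = f n


section Aux

variable {A : Type u} [Ring A]

/-- Left multiplication by `a` as an `Aᵐᵒᵖ`-linear map. -/
def lmul (a : A) : A →ₗ[Aᵐᵒᵖ] A where
  toFun x := a * x
  map_add' x y := mul_add a x y
  map_smul' c x := by
    show a * (x * c.unop) = (a * x) * c.unop
    rw [mul_assoc]

/-- Left annihilator of `u` as an `Aᵐᵒᵖ`-submodule (right ideal). -/
def leftAnn (u : A) : Submodule Aᵐᵒᵖ A where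
  carrier := {v | u * v = 0}
  zero_mem' := by simp
  add_mem' := by
    intro x y hx hy
    simp only [Set.mem_setOf_eq] at *
    rw [mul_add, hx, hy, add_zero]
  smul_mem' := by
    intro c x hx
    simp only [Set.mem_setOf_eq] at *
    show u * (x * c.unop) = 0
    rw [← mul_assoc, hx, zero_mul]

end Aux

/-- **Lemma 2.1.** Let `A` be a semiprime ring containing a right ideal `D` which is the
internal direct sum of countably many nonzero right ideals `D i` with `D i · D j = 0` for
`i ≠ j`. Then the sum of the two-sided ideals `A·D i` is direct. -/
theorem semiprime_directSum_twoSidedIdeals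
    (A : Type u) [Ring A] (hsp : SemiprimeRing A)
    (D : Submodule Aᵐᵒᵖ A) (Di : ℕ → Submodule Aᵐᵒᵖ A)
    (hne : ∀ i, Di i ≠ ⊥)
    (hsum : D = ⨆ i, Di i)
    (hindep : ∀ i, Di i ⊓ (⨆ j ∈ {j : ℕ | j ≠ i}, Di j) = ⊥)
    (hmul : ∀ i j, i ≠ j → ∀ x ∈ Di i, ∀ y ∈ Di j, x * y = 0) :
    ∀ i, (Submodule.span Aᵐᵒᵖ {x : A | ∃ a d : A, d ∈ Di i ∧ x = a * d}) ⊓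
        (⨆ j ∈ {j : ℕ | j ≠ i},
          Submodule.span Aᵐᵒᵖ {x : A | ∃ a d : A, d ∈ Di j ∧ x = a * d}) = ⊥ := by
  classical
  set T : ℕ → Submodule Aᵐᵒᵖ A := fun k =>
    Submodule.span Aᵐᵒᵖ {x : A | ∃ a d : A, d ∈ Di k ∧ x = a * d} with hT
  -- each T k is two-sided
  have hTtwo : ∀ k, IsTwoSided A (T k) := by
    intro k a x hx
    have hle : T k ≤ Submodule.comap (lmul (A := A) a) (T k) := by
      rw [hT]
      apply Submodule.span_le.2
      rintro _ ⟨b, d, hd, rfl⟩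
      simp only [Submodule.mem_comap]
      show a * (b * d) ∈ T k
      rw [← mul_assoc]
      exact Submodule.subset_span ⟨a * b, d, hd, rfl⟩
    exact hle hx
  -- the supremum over j ≠ i is two-sided
  have hSuptwo : ∀ i, IsTwoSided A (⨆ j ∈ {j : ℕ | j ≠ i}, T j) := by
    intro i a x hx
    have hle : (⨆ j ∈ {j : ℕ | j ≠ i}, T j) ≤
        Submodule.comap (lmul (A := A) a) (⨆ j ∈ {j : ℕ | j ≠ i}, T j) := by
      apply iSup_le
      intro j
      apply iSup_le
      intro hj y hy
      simp only [Submodule.mem_comap]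
      show a * y ∈ _
      exact Submodule.mem_iSup_of_mem j (Submodule.mem_iSup_of_mem hj (hTtwo j a y hy))
    exact hle hx
  -- products between different T's vanish
  have hTmul : ∀ i j, i ≠ j → ∀ u ∈ T i, ∀ v ∈ T j, u * v = 0 := by
    intro i j hij u hu
    induction hu using Submodule.span_induction with
    | mem x hx =>
      obtain ⟨a, d, hd, rfl⟩ := hx
      intro v hv
      induction hv using Submodule.span_induction with
      | mem y hy =>
        obtain ⟨b, e, he, rfl⟩ := hy
        have hdb : d * b ∈ Di i := (Di i).smul_mem (op b) hd
        have h0 : (d * b) * e = 0 := hmul i j hij _ hdb _ he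
        rw [mul_assoc, ← mul_assoc d b e, h0, mul_zero]
      | zero => rw [mul_zero]
      | add y z _ _ hy hz => rw [mul_add, hy, hz, add_zero]
      | smul c y _ hy =>
        show (a * d) * (y * c.unop) = 0
        rw [← mul_assoc, hy, zero_mul]
    | zero => intro v _; rw [zero_mul]
    | add x y _ _ hx hy => intro v hv; rw [add_mul, hx v hv, hy v hv, add_zero]
    | smul c x _ hx =>
      intro v hv
      show (x * c.unop) * v = 0
      rw [mul_assoc]
      exact hx _ (hTtwo j c.unop v hv)
  intro i
  set Z : Submodule Aᵐᵒᵖ A := T i ⊓ (⨆ j ∈ {j : ℕ | j ≠ i}, T j) with hZ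
  have hZtwo : IsTwoSided A Z := by
    intro a x hx
    exact ⟨hTtwo i a x hx.1, hSuptwo i a x hx.2⟩
  have hZsq : ∀ x ∈ Z, ∀ y ∈ Z, x * y = 0 := by
    intro x hx y hy
    -- x ∈ T i, y ∈ sup of T j, j ≠ i
    have hx1 : x ∈ T i := hx.1
    have hy2 : y ∈ (⨆ j ∈ {j : ℕ | j ≠ i}, T j) := hy.2
    have hle : (⨆ j ∈ {j : ℕ | j ≠ i}, T j) ≤ leftAnn (A := A) x := by
      apply iSup_le
      intro j
      apply iSup_le
      intro hj v hv
      exact hTmul i j (fun h => hj h.symm) x hx1 v hv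
    exact hle hy2
  exact hsp Z hZtwo hZsq


end TugPaper
end

section
/- Let A be a ring and let M be a nonzero non-singular right A-module. Then there exists a nonzero right ideal B of A such that B, viewed as a right A-module, is isomorphic to a submodule of M. -/
open MulOpposite

namespace TugPaper

universe u v

/-- **Lemma 2.2.** Let `A` be a ring and `M` a nonzero non-singular right `A`-module. Then
there exists a nonzero right ideal `B` of `A` which is isomorphic, as a right `A`-module,
to a submodule of `M` (i.e. it embeds into `M`). -/
theorem exists_rightIdeal_embedding_of_nonsingular
    (A : Type u) [Ring A] (M : Type u) [AddCommGroup M] [Module Aᵐᵒᵖ M]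
    (hM : Nontrivial M) (hns : IsNonsingular A M) :
    ∃ B : Submodule Aᵐᵒᵖ A, B ≠ ⊥ ∧ ∃ f : B →ₗ[Aᵐᵒᵖ] M, Function.Injective f := by
  obtain ⟨x, hx⟩ := exists_ne (0 : M)
  have hne : ¬ IsEssentialSubmodule (rAnn A x) := fun h => hx (hns x h)
  simp only [IsEssentialSubmodule, not_forall] at hne
  obtain ⟨C, hC, hCinf⟩ := hne
  rw [not_not] at hCinf
  refine ⟨C, hC, ⟨{
      toFun := fun c => op (c : A) • x
      map_add' := by intro a b; simp [op_add, add_smul]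
      map_smul' := by
        intro r c
        have : ((r • c : C) : A) = (c : A) * r.unop := rfl
        simp only [this, RingHom.id_apply]
        have h2 : op ((c : A) * r.unop) = r * op (c : A) := by simp
        rw [h2, mul_smul] }, ?_⟩⟩
  rw [← LinearMap.ker_eq_bot, LinearMap.ker_eq_bot']
  intro c hc
  have hmem : (c : A) ∈ rAnn A x ⊓ C := ⟨hc, c.2⟩
  rw [hCinf] at hmem
  exact Subtype.ext hmem

end TugPaper
end

section
/- Let A be a semiprime ring which does not contain an infinite direct sum of nonzero two-sided ideals, let M be an automorphism-invariant non-singular right A-module, and let M = X ⊕ Y be a decomposition with X quasi-injective non-singular and Y automorphism-invariant non-singular square-free (guaranteed to exist). Then either Y = 0 or Y contains a nonzero quasi-injective uniform submodule. -/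
open MulOpposite

namespace TugPaper

universe u v

/-!
If `Y ≠ 0` had no nonzero uniform submodule, every nonzero submodule would contain two disjoint
nonzero ones, giving pairwise disjoint nonzero submodules `Vₙ ≤ Y`. Pick `0 ≠ xₙ ∈ Vₙ` and right
ideals `Kₙ ≠ 0` with `r(xₙ) ∩ Kₙ = 0` (non-singularity). Non-singularity and square-freeness
force `Kₙ Kₘ = 0` for `n ≠ m`, and semiprimeness turns the orthogonal ideals `A Kₙ` into an
infinite direct sum.

So `Y` has a nonzero uniform submodule `V`. Its injective hull `H`, taken inside an injective hull
`E` of `Y`, is a uniform direct summand of `E`, so each endomorphism `F` of `H` has `F` or `1 - F`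
an automorphism. Automorphisms of `H` extend to `E` and hence preserve `Y`; therefore `H ∩ Y`
is stable under all endomorphisms of `H`, which makes it quasi-injective. It is uniform and
contains `V`.
-/

section Essential

variable {R M : Type*} [Ring R] [AddCommGroup M] [Module R M]

theorem IsEssentialSubmodule.mono {N N' : Submodule R M} (hN : IsEssentialSubmodule N)
    (h : N ≤ N') : IsEssentialSubmodule N' :=
  fun Z hZ => ne_bot_of_le_ne_bot (hN Z hZ) (inf_le_inf_right Z h)

theorem EssentialIn.trans {U V W : Submodule R M} (hUV : EssentialIn U V)
    (hVW : EssentialIn V W) : EssentialIn U W :=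
  ⟨hUV.1.trans hVW.1, fun Z hZW hZ => ne_bot_of_le_ne_bot
    (hUV.2 (V ⊓ Z) inf_le_left (hVW.2 Z hZW hZ)) (inf_le_inf_left U inf_le_right)⟩

theorem map_ne_bot_of_injective {M' : Type*} [AddCommGroup M'] [Module R M'] {f : M →ₗ[R] M'}
    (hf : Function.Injective f) {N : Submodule R M} (hN : N ≠ ⊥) : N.map f ≠ ⊥ :=
  fun h => hN (Submodule.map_injective_of_injective hf (h.trans (Submodule.map_bot f).symm))

theorem EssentialIn.isEssentialSubmodule_comap_subtype {V H : Submodule R M}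
    (h : EssentialIn V H) : IsEssentialSubmodule (V.comap H.subtype) := by
  intro Z hZ hbot
  have hmap : (V.comap H.subtype ⊓ Z).map H.subtype = V ⊓ Z.map H.subtype := by
    rw [Submodule.map_inf _ H.injective_subtype, Submodule.map_comap_subtype, inf_comm H V,
      inf_assoc, inf_eq_right.mpr (Submodule.map_subtype_le H Z)]
  rw [hbot, Submodule.map_bot] at hmap
  exact h.2 _ (Submodule.map_subtype_le H Z) (map_ne_bot_of_injective H.injective_subtype hZ)
    hmap.symm

theorem exists_maximal_essentialIn (V : Submodule R M) : ∃ H, Maximal (EssentialIn V) H := by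
  have hchains : ∀ c ⊆ {P | EssentialIn V P}, IsChain (· ≤ ·) c →
      ∀ P ∈ c, ∃ ub ∈ {P | EssentialIn V P}, ∀ P' ∈ c, P' ≤ ub := by
    intro c hc hchain P hP
    refine ⟨sSup c, ⟨(hc hP).1.trans (le_sSup hP), fun Z hZ hZne => ?_⟩, fun _ => le_sSup⟩
    obtain ⟨z, hzZ, hz0⟩ := (Submodule.ne_bot_iff Z).mp hZne
    obtain ⟨P', hP'c, hzP'⟩ :=
      (Submodule.mem_sSup_of_directed ⟨P, hP⟩ hchain.directedOn).mp (hZ hzZ)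
    have hVz : V ⊓ Submodule.span R {z} ≠ ⊥ := (hc hP'c).2 _
      ((Submodule.span_singleton_le_iff_mem _ _).mpr hzP') (by simpa using hz0)
    exact ne_bot_of_le_ne_bot hVz
      (inf_le_inf_left V ((Submodule.span_singleton_le_iff_mem _ _).mpr hzZ))
  obtain ⟨H, -, hH⟩ := zorn_le_nonempty₀ _ hchains V
    ⟨le_rfl, fun Z hZV hZ => by rwa [inf_eq_right.mpr hZV]⟩
  exact ⟨H, hH⟩

theorem exists_maximal_disjoint {α : Type*} [CompleteLattice α] [IsCompactlyGenerated α]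
    (a : α) : ∃ b, Maximal (Disjoint a) b := by
  obtain ⟨b, -, hb⟩ := zorn_le_nonempty₀ {b | Disjoint a b}
    (fun c hc hchain _ hy => ⟨sSup c,
      (hchain.directedOn (r := (· ≤ ·))).disjoint_sSup_right.mpr fun _ hb => hc hb,
      fun _ => le_sSup⟩) ⊥ disjoint_bot_right
  exact ⟨b, hb⟩

end Essential

section Injective

variable {R : Type*} [Ring R]

theorem injective_of_retract {M M' : Type v} [AddCommGroup M] [Module R M] [AddCommGroup M']
    [Module R M'] [Module.Injective R M'] (ι : M →ₗ[R] M') (p : M' →ₗ[R] M)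
    (hp : ∀ x, p (ι x) = x) : Module.Injective R M where
  out _ _ _ _ _ _ f hf g := by
    obtain ⟨h, hh⟩ := Module.Injective.out f hf (ι ∘ₗ g)
    exact ⟨p ∘ₗ h, fun x => by simp [hh, hp]⟩

variable {Q : Type v} [AddCommGroup Q] [Module R Q]

theorem exists_proj_of_disjoint [Module.Injective R Q] {H K : Submodule R Q} (h : Disjoint H K) :
    ∃ f : Q →ₗ[R] Q, (∀ x ∈ H, f x = x) ∧ ∀ x ∈ K, f x = 0 := by
  have hinj : Function.Injective (H.subtype.coprod K.subtype) := by
    rw [← LinearMap.ker_eq_bot, LinearMap.ker_coprod_of_disjoint_range _ _ (by simpa using h)]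
    simp
  obtain ⟨f, hf⟩ := Module.Injective.out _ hinj (H.subtype ∘ₗ LinearMap.fst R H K)
  exact ⟨f, fun x hx => by simpa using hf (⟨x, hx⟩, 0), fun x hx => by simpa using hf (0, ⟨x, hx⟩)⟩

theorem essentialIn_range_of_maximal_disjoint {H K : Submodule R Q} (hK : Maximal (Disjoint H) K)
    {f : Q →ₗ[R] Q} (hfH : ∀ x ∈ H, f x = x) (hfK : ∀ x ∈ K, f x = 0) :
    EssentialIn H (LinearMap.range f) := by
  refine ⟨fun x hx => ⟨x, hfH x hx⟩, fun Z hZ hZne => ?_⟩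
  obtain ⟨z, hzZ, hz0⟩ := (Submodule.ne_bot_iff Z).mp hZne
  obtain ⟨x, rfl⟩ := hZ hzZ
  have hxK : x ∉ K := fun hx => hz0 (hfK x hx)
  -- `K` is a maximal complement of `H`, so `K + xR` meets `H`, and `f` carries that
  -- intersection into `(f x)R ≤ Z` without changing it.
  have hmeet : ¬ Disjoint H (K ⊔ Submodule.span R {x}) := fun hdisj =>
    hxK (hK.2 hdisj le_sup_left (Submodule.mem_sup_right (Submodule.mem_span_singleton_self x)))
  obtain ⟨h, ⟨hhH, hhmem⟩, hh0⟩ :=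
    (Submodule.ne_bot_iff _).mp (fun hb => hmeet (disjoint_iff.mpr hb))
  obtain ⟨k, hkK, w, hw, rfl⟩ := Submodule.mem_sup.mp hhmem
  obtain ⟨a, rfl⟩ := Submodule.mem_span_singleton.mp hw
  have hfh : f (k + a • x) = a • f x := by rw [map_add, hfK k hkK, map_smul, zero_add]
  refine (Submodule.ne_bot_iff _).mpr ⟨k + a • x, ⟨hhH, ?_⟩, hh0⟩
  rw [← hfH _ hhH, hfh]
  exact Z.smul_mem a hzZ

theorem exists_retract_essentialIn [Module.Injective R Q] (V : Submodule R Q) :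
    ∃ (H : Submodule R Q) (p : Q →ₗ[R] H), EssentialIn V H ∧ ∀ x : H, p x = x := by
  obtain ⟨H, hH⟩ := exists_maximal_essentialIn V
  obtain ⟨K, hK⟩ := exists_maximal_disjoint H
  obtain ⟨f, hfH, hfK⟩ := exists_proj_of_disjoint hK.1
  have hHf := essentialIn_range_of_maximal_disjoint hK hfH hfK
  have hrange : LinearMap.range f = H := le_antisymm (hH.2 (hH.1.trans hHf) hHf.1) hHf.1
  refine ⟨H, f.codRestrict H fun x => hrange ▸ LinearMap.mem_range_self f x, hH.1,
    fun x => Subtype.ext (hfH x x.2)⟩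

theorem exists_injective_embedding [Small.{v} R] (N : Type v) [AddCommGroup N] [Module R N] :
    ∃ (Q : Type v) (_ : AddCommGroup Q) (_ : Module R Q), Module.Injective R Q ∧
      ∃ j : N →ₗ[R] Q, Function.Injective j := by
  let I := CategoryTheory.Injective.under (ModuleCat.of R N)
  have : CategoryTheory.Injective (ModuleCat.of R I) :=
    CategoryTheory.Injective.injective_under (ModuleCat.of R N)
  exact ⟨I, inferInstance, inferInstance, Module.injective_module_of_injective_object R I,
    (CategoryTheory.Injective.ι (ModuleCat.of R N)).hom,
    (ModuleCat.mono_iff_injective _).mp inferInstance⟩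

theorem exists_injective_essential_embedding [Small.{v} R] (N : Type v) [AddCommGroup N]
    [Module R N] :
    ∃ (E : Type v) (_ : AddCommGroup E) (_ : Module R E), Module.Injective R E ∧
      ∃ i : N →ₗ[R] E, Function.Injective i ∧ IsEssentialSubmodule (LinearMap.range i) := by
  obtain ⟨Q, _, _, hQ, j, hj⟩ := exists_injective_embedding (R := R) N
  obtain ⟨H, p, hjH, hp⟩ := exists_retract_essentialIn (LinearMap.range j)
  refine ⟨H, inferInstance, inferInstance, injective_of_retract H.subtype p hp,
    j.codRestrict H fun x => hjH.1 (LinearMap.mem_range_self j x),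
    fun x y hxy => hj (congrArg Subtype.val hxy), ?_⟩
  refine hjH.isEssentialSubmodule_comap_subtype.mono fun x hx => ?_
  obtain ⟨n, hn⟩ := hx
  exact ⟨n, Subtype.ext hn⟩

theorem exists_linearEquiv_extend_of_retract {E : Type*} [AddCommGroup E] [Module R E]
    {H : Submodule R E} {p : E →ₗ[R] H} (hp : ∀ x : H, p x = x) (g : H ≃ₗ[R] H) :
    ∃ G : E ≃ₗ[R] E, ∀ x : H, G x = g x := by
  let e := Submodule.prodEquivOfIsCompl H (LinearMap.ker p) (LinearMap.isCompl_of_proj hp)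
  refine ⟨e.symm.trans ((g.prodCongr (LinearEquiv.refl R _)).trans e), fun x => ?_⟩
  simp [e]

end Injective

section Uniform

variable {A : Type*} [Ring A]

theorem UniformModule.of_injective {M M' : Type*} [AddCommGroup M] [Module Aᵐᵒᵖ M]
    [AddCommGroup M'] [Module Aᵐᵒᵖ M'] {f : M →ₗ[Aᵐᵒᵖ] M'} (hf : Function.Injective f)
    (h : UniformModule A M') : UniformModule A M := by
  intro N₁ N₂ h₁ h₂ hb
  apply h _ _ (map_ne_bot_of_injective hf h₁) (map_ne_bot_of_injective hf h₂)
  rw [← Submodule.map_inf _ hf, hb, Submodule.map_bot]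

theorem UniformModule.of_essential_embedding {M M' : Type*} [AddCommGroup M] [Module Aᵐᵒᵖ M]
    [AddCommGroup M'] [Module Aᵐᵒᵖ M'] {f : M →ₗ[Aᵐᵒᵖ] M'} (hf : Function.Injective f)
    (hess : IsEssentialSubmodule (LinearMap.range f)) (h : UniformModule A M) :
    UniformModule A M' := by
  have hcomap : ∀ N : Submodule Aᵐᵒᵖ M', N ≠ ⊥ → N.comap f ≠ ⊥ := fun N hN hb =>
    hess N hN (by rw [← Submodule.map_comap_eq, hb, Submodule.map_bot])
  intro N₁ N₂ h₁ h₂ hb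
  apply h _ _ (hcomap N₁ h₁) (hcomap N₂ h₂)
  rw [← Submodule.comap_inf, hb, Submodule.comap_bot, LinearMap.ker_eq_bot.mpr hf]

theorem UniformModule.injective_or_injective_one_sub {M : Type*} [AddCommGroup M]
    [Module Aᵐᵒᵖ M] (h : UniformModule A M) (F : M →ₗ[Aᵐᵒᵖ] M) :
    Function.Injective F ∨ Function.Injective (1 - F : M →ₗ[Aᵐᵒᵖ] M) := by
  rw [← LinearMap.ker_eq_bot (f := F), ← LinearMap.ker_eq_bot (f := 1 - F), or_iff_not_and_not]
  rintro ⟨hF, hF'⟩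
  obtain ⟨z, ⟨hz₁, hz₂⟩, hz0⟩ := (Submodule.ne_bot_iff _).mp (h _ _ hF hF')
  have hFz : F z = 0 := hz₁
  have hz : z - F z = 0 := hz₂
  rw [hFz, sub_zero] at hz
  exact hz0 hz

variable {M : Type v} [AddCommGroup M] [Module Aᵐᵒᵖ M]

theorem UniformModule.surjective_of_injective [Module.Injective Aᵐᵒᵖ M] (h : UniformModule A M)
    {F : M →ₗ[Aᵐᵒᵖ] M} (hF : Function.Injective F) : Function.Surjective F := by
  let e := LinearEquiv.ofInjective F hF
  have : Module.Injective Aᵐᵒᵖ (LinearMap.range F) :=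
    injective_of_retract e.symm.toLinearMap e.toLinearMap fun x => by simp
  -- `range F ≅ M` is injective, hence a direct summand of the uniform module `M`
  obtain ⟨q, hq⟩ := Module.Injective.out (LinearMap.range F).subtype
    (LinearMap.range F).injective_subtype LinearMap.id
  have hc : IsCompl (LinearMap.range F) (LinearMap.ker q) := LinearMap.isCompl_of_proj hq
  by_cases hk : LinearMap.ker q = ⊥
  · rw [← LinearMap.range_eq_top]
    exact eq_top_of_isCompl_bot (hk ▸ hc)
  · have hr : LinearMap.range F = ⊥ := by_contra fun hr => h _ _ hr hk hc.inf_eq_bot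
    have hF0 : F = 0 := LinearMap.range_eq_bot.mp hr
    exact fun y => ⟨y, hF (by simp [hF0])⟩

theorem UniformModule.apply_mem_of_forall_linearEquiv [Module.Injective Aᵐᵒᵖ M]
    (h : UniformModule A M) {U : Submodule Aᵐᵒᵖ M}
    (hU : ∀ g : M ≃ₗ[Aᵐᵒᵖ] M, ∀ u ∈ U, g u ∈ U) (F : M →ₗ[Aᵐᵒᵖ] M) {u : M} (hu : u ∈ U) :
    F u ∈ U := by
  have hinj : ∀ G : M →ₗ[Aᵐᵒᵖ] M, Function.Injective G → G u ∈ U := fun G hG =>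
    hU (LinearEquiv.ofBijective G ⟨hG, h.surjective_of_injective hG⟩) u hu
  rcases h.injective_or_injective_one_sub F with hF | hF
  · exact hinj F hF
  · simpa using U.sub_mem hu (hinj _ hF)

theorem quasiInjective_of_embedding {H : Type v} [AddCommGroup H] [Module Aᵐᵒᵖ H]
    [Module.Injective Aᵐᵒᵖ H] {φ : M →ₗ[Aᵐᵒᵖ] H} (hφ : Function.Injective φ)
    (hinv : ∀ (F : H →ₗ[Aᵐᵒᵖ] H) (x : M), F (φ x) ∈ LinearMap.range φ) : QuasiInjective A M := by
  intro N f
  obtain ⟨F, hF⟩ := Module.Injective.out (φ ∘ₗ N.subtype) (hφ.comp N.injective_subtype) (φ ∘ₗ f)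
  refine ⟨(LinearEquiv.ofInjective φ hφ).symm ∘ₗ (F ∘ₗ φ).codRestrict _ (hinv F),
    fun n => hφ ?_⟩
  simpa [LinearEquiv.ofInjective_symm_apply] using hF n

end Uniform

theorem AutomorphismInvariant.exists_quasiInjective_uniform {A : Type u} [Ring A]
    [Small.{v} Aᵐᵒᵖ] {N : Type v} [AddCommGroup N] [Module Aᵐᵒᵖ N]
    (hai : AutomorphismInvariant A N) {V : Submodule Aᵐᵒᵖ N} (hV : V ≠ ⊥)
    (hVu : UniformModule A V) :
    ∃ U : Submodule Aᵐᵒᵖ N, U ≠ ⊥ ∧ QuasiInjective A U ∧ UniformModule A U := by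
  obtain ⟨E, _, _, hE, i, hi, hess⟩ := exists_injective_essential_embedding (R := Aᵐᵒᵖ) N
  -- `H` is an injective hull of `V` inside the injective hull `E` of `N`
  obtain ⟨H, p, hVH, hp⟩ := exists_retract_essentialIn (V.map i)
  have : Module.Injective Aᵐᵒᵖ H := injective_of_retract H.subtype p hp
  have hHu : UniformModule A H := by
    refine hVu.of_essential_embedding
      (f := (i ∘ₗ V.subtype).codRestrict H fun x => hVH.1 ⟨x, x.2, rfl⟩)
      (fun x y hxy => Subtype.ext (hi (congrArg Subtype.val hxy)))
      (hVH.isEssentialSubmodule_comap_subtype.mono ?_)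
    rintro x ⟨v, hv, hvx⟩
    exact ⟨⟨v, hv⟩, Subtype.ext hvx⟩
  let U := H.comap i
  let φ : U →ₗ[Aᵐᵒᵖ] H := (i ∘ₗ U.subtype).codRestrict H fun x => x.2
  have hφ : Function.Injective φ := fun x y hxy =>
    Subtype.ext (hi (congrArg Subtype.val hxy))
  -- automorphisms of `H` extend to automorphisms of `E`, which preserve `N`
  have hstable : ∀ g : H ≃ₗ[Aᵐᵒᵖ] H, ∀ h ∈ LinearMap.range φ, g h ∈ LinearMap.range φ := by
    rintro g _ ⟨x, rfl⟩
    obtain ⟨G, hG⟩ := exists_linearEquiv_extend_of_retract hp g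
    obtain ⟨y, hy⟩ := hai E hE i hi hess G x
    have hgy : (g (φ x) : E) = i y := (hG (φ x)).symm.trans hy
    exact ⟨⟨y, show i y ∈ H from hgy ▸ (g (φ x)).2⟩, Subtype.ext hgy.symm⟩
  have hVU : V ≤ U := fun v hv => hVH.1 ⟨v, hv, rfl⟩
  exact ⟨U, ne_bot_of_le_ne_bot hV hVU,
    quasiInjective_of_embedding hφ fun F x =>
      hHu.apply_mem_of_forall_linearEquiv hstable F ⟨x, rfl⟩,
    hHu.of_injective hφ⟩

open Function in
theorem exists_pairwise_disjoint_of_forall_exists_disjoint {α : Type*} [Lattice α] [OrderBot α]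
    (h : ∀ a : α, a ≠ ⊥ → ∃ b c, b ≤ a ∧ c ≤ a ∧ b ≠ ⊥ ∧ c ≠ ⊥ ∧ Disjoint b c) {a : α}
    (ha : a ≠ ⊥) :
    ∃ s : ℕ → α, (∀ n, s n ≠ ⊥) ∧ Pairwise (Disjoint on s) := by
  choose! b c hb hc hb0 hc0 hbc using h
  -- peel off `b (w n)` and keep splitting the remainder `w (n + 1) = c (w n)`
  let w : ℕ → α := fun n => c^[n] a
  have hw_succ : ∀ n, w (n + 1) = c (w n) := fun n => Function.iterate_succ_apply' c n a
  have hw0 : ∀ n, w n ≠ ⊥ := by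
    intro n
    induction n with
    | zero => exact ha
    | succ n ih => rw [hw_succ]; exact hc0 _ ih
  have hw : Antitone w := antitone_nat_of_succ_le fun n => hw_succ n ▸ hc _ (hw0 n)
  have hlt : ∀ n m, n < m → Disjoint (b (w n)) (b (w m)) := fun n m hnm =>
    (hbc _ (hw0 n)).mono_right ((hb _ (hw0 m)).trans ((hw hnm).trans_eq (hw_succ n)))
  refine ⟨fun n => b (w n), fun n => hb0 _ (hw0 n), fun n m hnm => ?_⟩
  rcases lt_or_gt_of_ne hnm with h | h
  · exact hlt n m h
  · exact (hlt m n h).symm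

section RightIdeals

variable {A : Type*} [Ring A]

theorem IsTwoSided.iSup {ι : Sort*} {I : ι → Submodule Aᵐᵒᵖ A} (hI : ∀ i, IsTwoSided A (I i)) :
    IsTwoSided A (⨆ i, I i) := fun a x hx =>
  Submodule.iSup_induction I (motive := fun x => a * x ∈ ⨆ i, I i) hx
    (fun i x hx => Submodule.mem_iSup_of_mem i (hI i a x hx)) (by simp)
    (fun x y hx hy => by rw [mul_add]; exact add_mem hx hy)

theorem IsTwoSided.inf {I J : Submodule Aᵐᵒᵖ A} (hI : IsTwoSided A I) (hJ : IsTwoSided A J) :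
    IsTwoSided A (I ⊓ J) := fun a x hx => ⟨hI a x hx.1, hJ a x hx.2⟩

/-- `AK = ∑ₐ aK`, the two-sided ideal generated by a right ideal `K`. -/
def twoSidedSpan (K : Submodule Aᵐᵒᵖ A) : Submodule Aᵐᵒᵖ A :=
  ⨆ a : A, K.map (LinearMap.mulLeft Aᵐᵒᵖ a)

theorem le_twoSidedSpan (K : Submodule Aᵐᵒᵖ A) : K ≤ twoSidedSpan K := fun k hk =>
  Submodule.mem_iSup_of_mem 1 ⟨k, hk, one_mul k⟩

theorem isTwoSided_twoSidedSpan (K : Submodule Aᵐᵒᵖ A) : IsTwoSided A (twoSidedSpan K) :=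
  fun a x hx => Submodule.iSup_induction _ (motive := fun x => a * x ∈ twoSidedSpan K) hx
    (fun b _ ⟨k, hk, hkx⟩ => Submodule.mem_iSup_of_mem (a * b) ⟨k, hk, by
      rw [← hkx]; exact mul_assoc a b k⟩)
    (by simp) (fun x y hx hy => by rw [mul_add]; exact add_mem hx hy)

theorem mul_eq_zero_of_mem_twoSidedSpan {K K' : Submodule Aᵐᵒᵖ A}
    (h : ∀ t ∈ K, ∀ c ∈ K', t * c = 0) {u y : A} (hu : u ∈ twoSidedSpan K)
    (hy : y ∈ twoSidedSpan K') : u * y = 0 := by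
  refine Submodule.iSup_induction _ (motive := fun u => u * y = 0) hu ?_ (zero_mul y)
    (fun u v hu hv => by rw [add_mul, hu, hv, add_zero])
  rintro a _ ⟨k, hk, rfl⟩
  refine Submodule.iSup_induction _ (motive := fun y => a * k * y = 0) hy ?_ (mul_zero _)
    (fun y z hy hz => by rw [mul_add, hy, hz, add_zero])
  rintro b _ ⟨k', hk', rfl⟩
  have hkb : k * b ∈ K := K.smul_mem (op b) hk
  change a * k * (b * k') = 0
  rw [mul_assoc, ← mul_assoc k, h _ hkb _ hk', mul_zero]

theorem SemiprimeRing.inf_iSup_eq_bot (hsp : SemiprimeRing A) {ι : Type*}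
    {B : ι → Submodule Aᵐᵒᵖ A} (hB : ∀ n, IsTwoSided A (B n))
    (horth : ∀ n m, n ≠ m → ∀ u ∈ B n, ∀ y ∈ B m, u * y = 0) (n : ι) :
    B n ⊓ (⨆ m ∈ {m : ι | m ≠ n}, B m) = ⊥ := by
  refine hsp _ ((hB n).inf (IsTwoSided.iSup fun m => IsTwoSided.iSup fun _ => hB m)) ?_
  intro u hu y hy
  have hle : (⨆ m ∈ {m : ι | m ≠ n}, B m) ≤ rAnn A u :=
    iSup₂_le fun m hm z hz => horth n m (Ne.symm hm) u hu.1 z hz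
  exact hle hy.2

theorem SemiprimeRing.not_noInfiniteIdealDirectSum (hsp : SemiprimeRing A)
    {K : ℕ → Submodule Aᵐᵒᵖ A} (hK : ∀ n, K n ≠ ⊥)
    (horth : ∀ n m, n ≠ m → ∀ t ∈ K n, ∀ c ∈ K m, t * c = 0) :
    ¬ NoInfiniteIdealDirectSum A := fun hni =>
  hni ⟨fun n => twoSidedSpan (K n), fun _ => isTwoSided_twoSidedSpan _,
    fun n => ne_bot_of_le_ne_bot (hK n) (le_twoSidedSpan _),
    hsp.inf_iSup_eq_bot (fun _ => isTwoSided_twoSidedSpan _) fun n m hnm _ hu _ hy =>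
      mul_eq_zero_of_mem_twoSidedSpan (horth n m hnm) hu hy⟩

theorem isEssentialSubmodule_comap_mulLeft {L K : Submodule Aᵐᵒᵖ A} (h : EssentialIn L K)
    {c : A} (hc : c ∈ K) : IsEssentialSubmodule (L.comap (LinearMap.mulLeft Aᵐᵒᵖ c)) := by
  intro Z hZ
  by_cases hcZ : Z.map (LinearMap.mulLeft Aᵐᵒᵖ c) = ⊥
  · have hZL : Z ≤ L.comap (LinearMap.mulLeft Aᵐᵒᵖ c) := by
      rw [← Submodule.map_le_iff_le_comap, hcZ]
      exact bot_le
    rwa [inf_eq_right.mpr hZL]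
  · have hcZK : Z.map (LinearMap.mulLeft Aᵐᵒᵖ c) ≤ K := by
      rintro _ ⟨z, -, rfl⟩
      exact K.smul_mem (op z) hc
    obtain ⟨_, ⟨hzL, z, hz, rfl⟩, hz0⟩ := (Submodule.ne_bot_iff _).mp (h.2 _ hcZK hcZ)
    exact (Submodule.ne_bot_iff _).mpr ⟨z, ⟨hzL, hz⟩, fun h0 => hz0 (by simp [h0])⟩

end RightIdeals

section Singular

variable {A : Type*} [Ring A] {N : Type*} [AddCommGroup N] [Module Aᵐᵒᵖ N]

theorem IsNonsingular.smul_eq_zero_of_essentialIn (hN : IsNonsingular A N) {x : N}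
    {K : Submodule Aᵐᵒᵖ A} (h : EssentialIn (rAnn A x ⊓ K) K) {c : A} (hc : c ∈ K) :
    op c • x = 0 :=
  hN _ <| (isEssentialSubmodule_comap_mulLeft h hc).mono fun a ha => by
    change op a • op c • x = 0
    rw [smul_smul, ← op_mul]
    exact ha.1

/-- The map `a ↦ x a` of a right `A`-module; its kernel is `rAnn A x`. -/
def toSpanSingletonOp (x : N) : A →ₗ[Aᵐᵒᵖ] N :=
  LinearMap.toSpanSingleton Aᵐᵒᵖ N x ∘ₗ (opLinearEquiv Aᵐᵒᵖ).toLinearMap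

theorem injective_toSpanSingletonOp_domRestrict {x : N} {C : Submodule Aᵐᵒᵖ A}
    (h : Disjoint (rAnn A x) C) : Function.Injective ((toSpanSingletonOp x).domRestrict C) :=
  (injective_iff_map_eq_zero _).mpr fun a ha =>
    Subtype.ext ((Submodule.mem_bot _).mp (h.le_bot ⟨ha, a.2⟩))

theorem SquareFreeModule.not_disjoint_rAnn (hsf : SquareFreeModule A N)
    {V₁ V₂ : Submodule Aᵐᵒᵖ N} (hV : Disjoint V₁ V₂) {x y : N} (hx : x ∈ V₁) (hy : y ∈ V₂)
    {C : Submodule Aᵐᵒᵖ A} (hC : C ≠ ⊥) (hCx : Disjoint (rAnn A x) C) :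
    ¬ Disjoint (rAnn A y) C := by
  intro hCy
  have : Nontrivial C := Submodule.nontrivial_iff_ne_bot.mpr hC
  -- `C ≅ xC ≤ V₁` and `C ≅ yC ≤ V₂`
  let f := (toSpanSingletonOp x).domRestrict C
  let g := (toSpanSingletonOp y).domRestrict C
  have hf := injective_toSpanSingletonOp_domRestrict hCx
  have hg := injective_toSpanSingletonOp_domRestrict hCy
  have hrange : ∀ {z : N} {V : Submodule Aᵐᵒᵖ N}, z ∈ V →
      LinearMap.range ((toSpanSingletonOp z).domRestrict C) ≤ V := by
    rintro z V hz _ ⟨a, rfl⟩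
    exact V.smul_mem (op (a : A)) hz
  have hne : ∀ {φ : C →ₗ[Aᵐᵒᵖ] N}, Function.Injective φ → LinearMap.range φ ≠ ⊥ :=
    fun hφ => by
      rw [LinearMap.range_eq_map]
      exact map_ne_bot_of_injective hφ top_ne_bot
  exact hsf ⟨LinearMap.range f, LinearMap.range g, hne hf, hne hg,
    (hV.mono (hrange hx) (hrange hy)).eq_bot,
    ⟨(LinearEquiv.ofInjective f hf).symm.trans (LinearEquiv.ofInjective g hg)⟩⟩

theorem mul_eq_zero_of_disjoint_rAnn (hns : IsNonsingular A N) (hsf : SquareFreeModule A N)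
    {V₁ V₂ : Submodule Aᵐᵒᵖ N} (hV : Disjoint V₁ V₂) {x y : N} (hx : x ∈ V₁) (hy : y ∈ V₂)
    {K K' : Submodule Aᵐᵒᵖ A} (hK : Disjoint (rAnn A x) K) (hK' : Disjoint (rAnn A y) K')
    {t c : A} (ht : t ∈ K) (hc : c ∈ K') : t * c = 0 := by
  -- Either `r(x t) ∩ K'` is essential in `K'`, so that `x t c = 0` by non-singularity, or some
  -- nonzero `C ≤ K'` embeds into both `x t A ≤ V₁` and `y A ≤ V₂`.
  by_cases hess : EssentialIn (rAnn A (op t • x) ⊓ K') K'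
  · have hxtc : op (t * c) • x = 0 := by
      rw [op_mul, mul_smul]
      exact hns.smul_eq_zero_of_essentialIn hess hc
    exact (Submodule.mem_bot _).mp (hK.le_bot ⟨hxtc, K.smul_mem (op c) ht⟩)
  · simp only [EssentialIn, inf_le_right, true_and, not_forall, not_not, exists_prop] at hess
    obtain ⟨C, hCK', hC, hC0⟩ := hess
    have hCxt : Disjoint (rAnn A (op t • x)) C := by
      rw [disjoint_iff, ← inf_eq_right.mpr hCK', ← inf_assoc]
      exact hC0
    exact (hsf.not_disjoint_rAnn hV (V₁.smul_mem (op t) hx) hy hC hCxt (hK'.mono_right hCK')).elim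

theorem exists_uniform_submodule (hsp : SemiprimeRing A) (hni : NoInfiniteIdealDirectSum A)
    [Nontrivial N] (hns : IsNonsingular A N) (hsf : SquareFreeModule A N) :
    ∃ V : Submodule Aᵐᵒᵖ N, V ≠ ⊥ ∧ UniformModule A V := by
  by_contra! hnone
  have hsplit : ∀ V : Submodule Aᵐᵒᵖ N, V ≠ ⊥ → ∃ P₁ P₂, P₁ ≤ V ∧ P₂ ≤ V ∧ P₁ ≠ ⊥ ∧ P₂ ≠ ⊥ ∧
      Disjoint P₁ P₂ := by
    intro V hV
    have hV := hnone V hV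
    simp only [UniformModule, not_forall, not_not, exists_prop] at hV
    obtain ⟨P₁, P₂, h₁, h₂, h⟩ := hV
    refine ⟨P₁.map V.subtype, P₂.map V.subtype, Submodule.map_subtype_le V P₁,
      Submodule.map_subtype_le V P₂, map_ne_bot_of_injective V.injective_subtype h₁,
      map_ne_bot_of_injective V.injective_subtype h₂, disjoint_iff.mpr ?_⟩
    rw [← Submodule.map_inf _ V.injective_subtype, h, Submodule.map_bot]
  obtain ⟨W, hW0, hW⟩ := exists_pairwise_disjoint_of_forall_exists_disjoint hsplit top_ne_bot
  choose x hxW hx0 using fun n => (Submodule.ne_bot_iff _).mp (hW0 n)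
  have hK : ∀ n, ∃ K : Submodule Aᵐᵒᵖ A, K ≠ ⊥ ∧ Disjoint (rAnn A (x n)) K := by
    by_contra! h
    obtain ⟨n, hn⟩ := h
    exact hx0 n (hns _ fun Z hZ => disjoint_iff.not.mp (hn Z hZ))
  choose K hK0 hKx using hK
  exact hsp.not_noInfiniteIdealDirectSum hK0
    (fun n m hnm _ ht _ hc => mul_eq_zero_of_disjoint_rAnn hns hsf (hW hnm) (hxW n) (hxW m)
      (hKx n) (hKx m) ht hc) hni

end Singular

theorem squareFree_part_zero_or_contains_quasiInjective_uniform_general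
    (A : Type u) [Ring A] (hsp : SemiprimeRing A) (hni : NoInfiniteIdealDirectSum A)
    (M : Type u) [AddCommGroup M] [Module Aᵐᵒᵖ M]
    (Y : Submodule Aᵐᵒᵖ M)
    (hYai : AutomorphismInvariant A Y) (hYns : IsNonsingular A Y)
    (hYsf : SquareFreeModule A Y) :
    Y = ⊥ ∨ ∃ U : Submodule Aᵐᵒᵖ Y, U ≠ ⊥ ∧ QuasiInjective A U ∧ UniformModule A U := by
  by_cases hY : Y = ⊥
  · exact Or.inl hY
  have : Nontrivial Y := Submodule.nontrivial_iff_ne_bot.mpr hY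
  obtain ⟨V, hV, hVu⟩ := exists_uniform_submodule hsp hni hYns hYsf
  exact Or.inr (hYai.exists_quasiInjective_uniform hV hVu)

/-- **Lemma 2.4(2).** Let `A` be a semiprime ring not containing an infinite direct sum of
nonzero two-sided ideals, `M` an automorphism-invariant non-singular right `A`-module, and
`M = X ⊕ Y` a decomposition with `X` quasi-injective non-singular and `Y`
automorphism-invariant non-singular square-free. Then either `Y = 0` or `Y` contains a
nonzero quasi-injective uniform submodule. -/
theorem squareFree_part_zero_or_contains_quasiInjective_uniform
    (A : Type u) [Ring A] (hsp : SemiprimeRing A) (hni : NoInfiniteIdealDirectSum A)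
    (M : Type u) [AddCommGroup M] [Module Aᵐᵒᵖ M]
    (hai : AutomorphismInvariant A M) (hns : IsNonsingular A M)
    (X Y : Submodule Aᵐᵒᵖ M) (hcompl : IsCompl X Y)
    (hXqi : QuasiInjective A X) (hXns : IsNonsingular A X)
    (hYai : AutomorphismInvariant A Y) (hYns : IsNonsingular A Y)
    (hYsf : SquareFreeModule A Y) :
    Y = ⊥ ∨ ∃ U : Submodule Aᵐᵒᵖ Y, U ≠ ⊥ ∧ QuasiInjective A U ∧ UniformModule A U :=
  squareFree_part_zero_or_contains_quasiInjective_uniform_general A hsp hni M Y hYai hYns hYsf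

end TugPaper
end
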